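/- Let q > 3 be a prime power, n ≥ 2, and let K be a field equipped with a ring homomorphism 𝔽_q → K. If x ∈ SL_n(K) commutes with the image in SL_n(K) of every element of SL_n(𝔽_q), then x is a scalar matrix, i.e., x lies in the center of SL_n(K). (This is the claim, used in the proof of the normalizer lemma for SL_n(𝔽_q[t]), that the centralizer of 𝔾(𝔽_q) in 𝔾 is central, in its type A_{n-1} instance.) -/

import Mathlib

/-!
The images of the elementary transvections `1 + E_ij` already lie in the image of `SL_n(𝔽_q)`,
and a matrix commuting with every `E_ij`, `i ≠ j`, is scalar: comparing entries of
`M E_ij = E_ij M` kills the off-diagonal entries and equates the diagonal ones.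
-/

open Matrix

namespace Matrix

variable {n R : Type*} [Fintype n] [DecidableEq n] [CommRing R]

theorem mem_range_scalar_of_commute_transvection_one {M : Matrix n n R}
    (hM : ∀ i j : n, i ≠ j → Commute (transvection i j (1 : R)) M) :
    M ∈ Set.range (scalar n) :=
  mem_range_scalar_of_commute_single fun i j hij ↦ by
    simpa [transvection] using (hM i j hij).sub_left (Commute.one_left M)

namespace SpecialLinearGroup

variable {S : Type*} [CommRing S]

theorem map_transvection (f : R →+* S) {i j : n} (hij : i ≠ j) (b : R) :
    map f (transvection hij b) = transvection hij (f b) := by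
  ext k l
  simp [transvection_coe, Matrix.one_apply, single_apply, apply_ite f]

theorem coe_mem_range_scalar_of_forall_commute_map (f : R →+* S) {g : SpecialLinearGroup n S}
    (hg : ∀ y : SpecialLinearGroup n R, Commute g (map f y)) :
    (g : Matrix n n S) ∈ Set.range (scalar n) :=
  mem_range_scalar_of_commute_transvection_one fun i j hij ↦ by
    have h := ((hg (transvection hij 1)).map coeMonoidHom).symm
    rwa [map_transvection, map_one] at h

end SpecialLinearGroup

end Matrix

theorem centralizer_of_SL_Fq_is_central
    (n : ℕ)
    (Fq : Type) [Field Fq]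
    (K : Type) [Field K] (f : Fq →+* K)
    (x : SpecialLinearGroup (Fin n) K)
    (hx : ∀ y : SpecialLinearGroup (Fin n) Fq,
      x * SpecialLinearGroup.map (n := Fin n) f y = SpecialLinearGroup.map (n := Fin n) f y * x) :
    ∃ c : K, (x : Matrix (Fin n) (Fin n) K) = c • (1 : Matrix (Fin n) (Fin n) K) := by
  obtain ⟨c, hc⟩ := SpecialLinearGroup.coe_mem_range_scalar_of_forall_commute_map f hx
  exact ⟨c, by rw [← hc, smul_one_eq_diagonal, scalar_apply]⟩
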